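/- For every positive integer n, Σ_{k=0}^{n-1} (11k^3+7k^2-1)·(-1)^{n-1-k}·β_k = Σ_{k=0}^{n-1} C(n,k+1)^2·C(n+k,k)·(4n^3 - 2n^2 k - n k^2 - 4n^2 - 3nk + k^2 - 2n + 2k + 1), where β_k = Σ_{j=0}^{k} C(k,j)^2·C(k+j,j). -/

import Mathlib

/-!
Both sides equal `n²(n-1)β_n - n³β_{n-1}`. For the left side this is an induction on `n` driven
by Apéry's recurrence `(n+1)²β_{n+1} = (11n²+11n+3)β_n + n²β_{n-1}`. The recurrence and the identity
for the right side are proved by creative telescoping: with `t(n,k) = C(n,k)² C(n+k,k)`, each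
summand is, up to terms that sum to the `β`'s, a difference `G(k+1) - G(k)` of an explicit
certificate. These term identities become identities of rational functions once every term is
written as `t(n+1,k)` (or `t(n+2,k)`) times a ratio; all denominators of these ratios are positive,
so no boundary case arises.
-/

def apheryBeta (k : ℕ) : ℕ := ∑ j ∈ Finset.range (k + 1), (Nat.choose k j) ^ 2 * Nat.choose (k + j) j

open Finset

variable {K : Type*} [Field K] [CharZero K]

namespace Nat

theorem cast_choose_succ_right_eq_div (n k : ℕ) :
    (n.choose (k + 1) : K) = n.choose k * (n - k) / (k + 1) := by
  rw [eq_div_iff (Nat.cast_add_one_ne_zero k)]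
  rcases le_or_gt k n with h | h
  · have := congrArg (Nat.cast (R := K)) (choose_succ_right_eq n k)
    push_cast [h] at this
    exact this
  · simp [choose_eq_zero_of_lt h, choose_eq_zero_of_lt (h.trans (lt_add_one k))]

theorem cast_choose_succ_succ_eq_div (n k : ℕ) :
    ((n + 1).choose (k + 1) : K) = (n + 1) * n.choose k / (k + 1) := by
  rw [eq_div_iff (Nat.cast_add_one_ne_zero k)]
  exact_mod_cast (add_one_mul_choose_eq n k).symm

theorem cast_choose_eq_choose_succ_mul_div (n k : ℕ) :
    (n.choose k : K) = (n + 1).choose k * (n + 1 - k) / (n + 1) := by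
  rw [eq_div_iff (Nat.cast_add_one_ne_zero n)]
  rcases le_or_gt k (n + 1) with h | h
  · have := congrArg (Nat.cast (R := K)) (choose_mul_succ_eq n k)
    push_cast [h] at this
    exact this
  · simp [choose_eq_zero_of_lt h, choose_eq_zero_of_lt ((lt_add_one n).trans h)]

end Nat

def apheryTerm (n k : ℕ) : ℕ := n.choose k ^ 2 * (n + k).choose k

theorem apheryBeta_eq_sum_apheryTerm (n : ℕ) :
    apheryBeta n = ∑ k ∈ range (n + 1), apheryTerm n k := rfl

theorem apheryTerm_zero_right (n : ℕ) : apheryTerm n 0 = 1 := by simp [apheryTerm]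

theorem apheryTerm_eq_zero_of_lt {n k : ℕ} (h : n < k) : apheryTerm n k = 0 := by
  simp [apheryTerm, Nat.choose_eq_zero_of_lt h]

theorem apheryBeta_eq_sum_range_of_lt {n m : ℕ} (h : n < m) :
    apheryBeta n = ∑ k ∈ range m, apheryTerm n k :=
  sum_subset (range_subset_range.2 h) fun k _ hk =>
    apheryTerm_eq_zero_of_lt (by simpa using hk)

theorem cast_apheryTerm_succ_right (n k : ℕ) :
    (apheryTerm n (k + 1) : K) = apheryTerm n k * (n - k) ^ 2 * (n + k + 1) / (k + 1) ^ 3 := by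
  have : n + (k + 1) = n + k + 1 := rfl
  simp only [apheryTerm, this, Nat.cast_mul, Nat.cast_pow, Nat.cast_choose_succ_right_eq_div n k,
    Nat.cast_choose_succ_succ_eq_div (n + k) k]
  push_cast
  field_simp

theorem cast_apheryTerm_eq_apheryTerm_succ_mul_div (n k : ℕ) :
    (apheryTerm n k : K) =
      apheryTerm (n + 1) k * (n + 1 - k) ^ 2 / ((n + 1) * (n + k + 1)) := by
  have : n + 1 + k = n + k + 1 := Nat.add_right_comm n 1 k
  simp only [apheryTerm, this, Nat.cast_mul, Nat.cast_pow,
    Nat.cast_choose_eq_choose_succ_mul_div n k, Nat.cast_choose_eq_choose_succ_mul_div (n + k) k]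
  push_cast
  field_simp
  ring

theorem cast_choose_succ_sq_mul_choose (n k : ℕ) :
    (n.choose (k + 1) : K) ^ 2 * (n + k).choose k =
      apheryTerm n (k + 1) * (k + 1) / (n + k + 1) := by
  have hk : n + (k + 1) = n + k + 1 := rfl
  have : (n + k + 1 : K) ≠ 0 := by exact_mod_cast Nat.succ_ne_zero (n + k)
  simp only [apheryTerm, hk, Nat.cast_mul, Nat.cast_pow,
    Nat.cast_choose_succ_succ_eq_div (n + k) k]
  push_cast
  field_simp

-- The right-hand side is the Zeilberger certificate of Apéry's recurrence.
theorem sum_range_succ_apheryTerm_recurrence (n m : ℕ) :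
    ∑ k ∈ range (m + 1), (((n : ℚ) + 2) ^ 2 * apheryTerm (n + 2) k
        - (11 * ((n : ℚ) + 1) ^ 2 + 11 * (n + 1) + 3) * apheryTerm (n + 1) k
        - ((n : ℚ) + 1) ^ 2 * apheryTerm n k) =
      apheryTerm (n + 1) m *
        (((m : ℚ) + 1) ^ 2 + (6 * n + 7) * (m + 1) - 11 * n ^ 2 - 37 * n - 30) := by
  induction m with
  | zero => simp [apheryTerm_zero_right]; ring
  | succ m ih =>
    rw [sum_range_succ, ih, cast_apheryTerm_succ_right (n + 2), cast_apheryTerm_succ_right (n + 1),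
      cast_apheryTerm_succ_right n, cast_apheryTerm_eq_apheryTerm_succ_mul_div n,
      cast_apheryTerm_eq_apheryTerm_succ_mul_div (n + 1)]
    push_cast
    field_simp
    ring

theorem apheryBeta_recurrence (n : ℕ) :
    (n + 2) ^ 2 * apheryBeta (n + 2) =
      (11 * (n + 1) ^ 2 + 11 * (n + 1) + 3) * apheryBeta (n + 1) + (n + 1) ^ 2 * apheryBeta n := by
  have h := sum_range_succ_apheryTerm_recurrence n (n + 2)
  rw [apheryTerm_eq_zero_of_lt (by omega : n + 1 < n + 2), Nat.cast_zero, zero_mul,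
    sum_sub_distrib, sum_sub_distrib, ← mul_sum, ← mul_sum, ← mul_sum] at h
  rw [apheryBeta_eq_sum_apheryTerm, apheryBeta_eq_sum_range_of_lt (by omega : n + 1 < n + 3),
    apheryBeta_eq_sum_range_of_lt (by omega : n < n + 3)]
  qify
  linear_combination h

theorem sum_range_alternating_apheryBeta (n : ℕ) :
    ∑ k ∈ range (n + 1),
        (11 * (k : ℤ) ^ 3 + 7 * (k : ℤ) ^ 2 - 1) * (-1) ^ (n - k) * (apheryBeta k : ℤ) =
      ((n : ℤ) + 1) ^ 2 * n * apheryBeta (n + 1) - ((n : ℤ) + 1) ^ 3 * apheryBeta n := by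
  induction n with
  | zero => simp [apheryBeta]
  | succ n ih =>
    have hsign : ∀ k ∈ range (n + 1), (-1 : ℤ) ^ (n + 1 - k) = -(-1) ^ (n - k) := fun k hk => by
      rw [Nat.sub_add_comm (Nat.lt_succ_iff.1 (mem_range.1 hk)), pow_succ, mul_neg_one]
    have hrec : ((n : ℤ) + 2) ^ 2 * apheryBeta (n + 2) =
        (11 * ((n : ℤ) + 1) ^ 2 + 11 * (n + 1) + 3) * apheryBeta (n + 1)
          + ((n : ℤ) + 1) ^ 2 * apheryBeta n := by
      exact_mod_cast apheryBeta_recurrence n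
    rw [sum_range_succ, Nat.sub_self, pow_zero,
      sum_congr rfl fun k hk => by rw [hsign k hk, mul_neg, neg_mul], sum_neg_distrib, ih]
    push_cast
    linear_combination (-(n : ℤ) - 1) * hrec

-- The right-hand side is `G(0) - G(m)`, where `G` is the certificate of the identity.
theorem sum_range_choose_sq_mul_choose_telescope (n m : ℕ) :
    ∑ k ∈ range m, (((n + 1).choose (k + 1) : ℚ) ^ 2 * (n + 1 + k).choose k *
          (4 * ((n : ℚ) + 1) ^ 3 - 2 * ((n : ℚ) + 1) ^ 2 * k - ((n : ℚ) + 1) * (k : ℚ) ^ 2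
            - 4 * ((n : ℚ) + 1) ^ 2 - 3 * ((n : ℚ) + 1) * k + (k : ℚ) ^ 2 - 2 * ((n : ℚ) + 1)
            + 2 * k + 1)
        - (((n : ℚ) + 1) ^ 2 * n * apheryTerm (n + 1) (k + 1)
          - ((n : ℚ) + 1) ^ 3 * apheryTerm n k)) =
      ((n : ℚ) + 1) ^ 2 * n - apheryTerm (n + 1) m * (n + 1 - m) *
        ((m : ℚ) ^ 3 + (m : ℚ) ^ 2 - 2 * ((n : ℚ) + 1) ^ 2 * m + ((n : ℚ) + 1) ^ 3
          - ((n : ℚ) + 1) ^ 2) / (n + 1 + m) := by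
  induction m with
  | zero => simp [apheryTerm_zero_right]; field_simp; ring
  | succ m ih =>
    rw [sum_range_succ, ih, cast_choose_succ_sq_mul_choose, cast_apheryTerm_succ_right (n + 1),
      cast_apheryTerm_eq_apheryTerm_succ_mul_div n]
    push_cast
    field_simp
    ring

theorem sum_range_choose_sq_mul_choose (n : ℕ) :
    ∑ k ∈ range (n + 1), ((n + 1).choose (k + 1) : ℤ) ^ 2 * ((n + 1 + k).choose k : ℤ) *
        (4 * ((n : ℤ) + 1) ^ 3 - 2 * ((n : ℤ) + 1) ^ 2 * k - ((n : ℤ) + 1) * (k : ℤ) ^ 2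
          - 4 * ((n : ℤ) + 1) ^ 2 - 3 * ((n : ℤ) + 1) * k + (k : ℤ) ^ 2 - 2 * ((n : ℤ) + 1)
          + 2 * k + 1) =
      ((n : ℤ) + 1) ^ 2 * n * apheryBeta (n + 1) - ((n : ℤ) + 1) ^ 3 * apheryBeta n := by
  have h := sum_range_choose_sq_mul_choose_telescope n (n + 1)
  rw [sum_sub_distrib, sum_sub_distrib, ← mul_sum, ← mul_sum, Nat.cast_add_one, sub_self,
    mul_zero, zero_mul, zero_div, sub_zero] at h
  rw [apheryBeta_eq_sum_apheryTerm (n + 1), sum_range_succ' (apheryTerm (n + 1)),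
    apheryTerm_zero_right, apheryBeta_eq_sum_apheryTerm n]
  qify
  linear_combination h

theorem stmt5_general (n : ℕ) :
    ∑ k ∈ Finset.range n,
        (11 * (k : ℤ) ^ 3 + 7 * (k : ℤ) ^ 2 - 1) * (-1) ^ (n - 1 - k) * (apheryBeta k : ℤ) =
      ∑ k ∈ Finset.range n,
        ((n.choose (k + 1) : ℤ)) ^ 2 * ((n + k).choose k : ℤ) *
          (4 * (n : ℤ) ^ 3 - 2 * (n : ℤ) ^ 2 * k - (n : ℤ) * (k : ℤ) ^ 2 - 4 * (n : ℤ) ^ 2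
            - 3 * (n : ℤ) * k + (k : ℤ) ^ 2 - 2 * n + 2 * k + 1) := by
  cases n with
  | zero => rfl
  | succ n =>
    push_cast
    rw [sum_range_alternating_apheryBeta, sum_range_choose_sq_mul_choose]

theorem stmt5 (n : ℕ) (hn : 0 < n) :
    ∑ k ∈ Finset.range n,
        (11 * (k : ℤ) ^ 3 + 7 * (k : ℤ) ^ 2 - 1) * (-1) ^ (n - 1 - k) * (apheryBeta k : ℤ) =
      ∑ k ∈ Finset.range n,
        ((n.choose (k + 1) : ℤ)) ^ 2 * ((n + k).choose k : ℤ) *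
          (4 * (n : ℤ) ^ 3 - 2 * (n : ℤ) ^ 2 * k - (n : ℤ) * (k : ℤ) ^ 2 - 4 * (n : ℤ) ^ 2
            - 3 * (n : ℤ) * k + (k : ℤ) ^ 2 - 2 * n + 2 * k + 1) :=
  stmt5_general n
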